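/- For a C^m I-net N_M on M and its CI-net reduction N_{S_M}: N_M is satisfiable if and only if N_{S_M} is satisfiable, and when both are satisfiable, M_a >_{N_M} M_b if and only if overline{M_a} >_{N_{S_M}} overline{M_b} for all M_a, M_b ⊆ M. -/

import Mathlib

variable {O : Type*} [DecidableEq O]

/-- A strict partial order: irreflexive, asymmetric, transitive. -/
def IsPrefRel {α : Type*} (r : α → α → Prop) : Prop :=
  (∀ a, ¬ r a a) ∧ (∀ a b, r a b → ¬ r b a) ∧ (∀ a b c, r a b → r b c → r a c)

/-- A `CᵐI`-statement `M⁺, M⁻ : M₁ ▷ M₂` on the finite multiset `M`. -/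
structure CmIStmt (O : Type*) [DecidableEq O] (M : Multiset O) where
  mp : Multiset O
  mm : Multiset O
  m1 : Multiset O
  m2 : Multiset O
  hp : mp ≤ M
  hm : mm ≤ M - mp
  h1 : m1 ≤ M - (mp + mm)
  h2 : m2 ≤ M - (mp + mm)
  n1 : m1 ≠ 0
  n2 : m2 ≠ 0
  d12 : m1 ∩ m2 = 0

/-- `r` satisfies a `CᵐI`-statement. -/
def SatCmStmt (M : Multiset O) (r : Multiset O → Multiset O → Prop)
    (c : CmIStmt O M) : Prop :=
  ∀ M' ≤ M - (c.mp + c.mm + c.m1 + c.m2),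
    r (M' + c.mp + c.m1) (M' + c.mp + c.m2)

/-- Monotonicity on sub-multisets of `M`. -/
def MonotonicOn (M : Multiset O) (r : Multiset O → Multiset O → Prop) : Prop :=
  ∀ a b : Multiset O, a ≤ M → b < a → r a b

/-- Strict-partial-order conditions restricted to sub-multisets of `M`. -/
def IsPrefRelOn (M : Multiset O) (r : Multiset O → Multiset O → Prop) : Prop :=
  (∀ a, a ≤ M → ¬ r a a) ∧
  (∀ a b, a ≤ M → b ≤ M → r a b → ¬ r b a) ∧
  (∀ a b c, a ≤ M → b ≤ M → c ≤ M → r a b → r b c → r a c)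

/-- `r` satisfies a `CᵐI`-net. -/
def SatCmNet (M : Multiset O) (r : Multiset O → Multiset O → Prop)
    (N : Set (CmIStmt O M)) : Prop :=
  MonotonicOn M r ∧ ∀ c ∈ N, SatCmStmt M r c

/-- Satisfiability of a `CᵐI`-net. -/
def CmSatisfiable (M : Multiset O) (N : Set (CmIStmt O M)) : Prop :=
  ∃ r : Multiset O → Multiset O → Prop, IsPrefRelOn M r ∧ SatCmNet M r N

/-- CI-flip with respect to a single `CᵐI`-statement. -/
def CmFlipStmt (M : Multiset O) (c : CmIStmt O M) (a b : Multiset O) : Prop :=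
  ∃ M' ≤ M - (c.mp + c.mm + c.m1 + c.m2),
    a = M' + c.mp + c.m1 ∧ b = M' + c.mp + c.m2

/-- Worsening flip for a `CᵐI`-net: a `⊃`-flip within `M` or a CI-flip. -/
def CmWFlip (M : Multiset O) (N : Set (CmIStmt O M)) (a b : Multiset O) : Prop :=
  (b < a ∧ a ≤ M) ∨ ∃ c ∈ N, CmFlipStmt M c a b

/-- The intersection of all preference relations satisfying `N`. -/
def CmInduced (M : Multiset O) (N : Set (CmIStmt O M)) (a b : Multiset O) : Prop :=
  ∀ r : Multiset O → Multiset O → Prop, IsPrefRelOn M r ∧ SatCmNet M r N → r a b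

variable [Fintype O]

/-- The set of indexed copies `{(o, i) : 1 ≤ i ≤ m_M(o)}`. -/
def SMset (M : Multiset O) : Finset (O × ℕ) :=
  Finset.univ.biUnion fun o : O => (Finset.Icc 1 (M.count o)).image fun i => (o, i)

/-- The block of indexed copies `{o_a, ..., o_b}` of `o`. -/
def block (o : O) (a b : ℕ) : Finset (O × ℕ) :=
  (Finset.Icc a b).image fun i => (o, i)

/-- `S ∈ ss(M')`: `S ⊆ S_M` and for every `o`, `S` has exactly `m_{M'}(o)`
indexed copies of `o`. -/
def InSS (M M' : Multiset O) (S : Finset (O × ℕ)) : Prop :=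
  S ⊆ SMset M ∧ ∀ o : O, (S.filter fun p => p.1 = o).card = M'.count o

/-- `overline{M'} = ⋃_o {o_1, ..., o_{m_{M'}(o)}}`. -/
def ovl (M' : Multiset O) : Finset (O × ℕ) :=
  Finset.univ.biUnion fun o : O => block o 1 (M'.count o)

/-- One step of the index-shifting order `>_i` on subsets of `S_M`: the
symmetric difference is `{o_i, o_{i+1}}` with `o_i ∈ S₁`, `o_{i+1} ∈ S₂`. -/
def IStep (M : Multiset O) (S1 S2 : Finset (O × ℕ)) : Prop :=
  S1 ⊆ SMset M ∧ S2 ⊆ SMset M ∧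
    ∃ (o : O) (i : ℕ), (S1 ∪ S2) \ (S1 ∩ S2) = {(o, i), (o, i + 1)} ∧
      (o, i) ∈ S1 ∧ (o, i + 1) ∈ S2

/-- A CI-flip with respect to one of the chain statements
`cs_i = {o_i ▷ o_{i+1} : o ∈ O, 1 ≤ i < m_M(o)}`. -/
def CsFlip (M : Multiset O) (S T : Finset (O × ℕ)) : Prop :=
  ∃ (o : O) (i : ℕ), 1 ≤ i ∧ i < M.count o ∧
    ∃ S' ⊆ SMset M \ {(o, i), (o, i + 1)},
      S = insert (o, i) S' ∧ T = insert (o, i + 1) S'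

/-- `Ŝ⁺`: forward blocks `{o_1, ..., o_{m⁺(o)}}`. -/
def hatP (M : Multiset O) (c : CmIStmt O M) : Finset (O × ℕ) :=
  Finset.univ.biUnion fun o : O => block o 1 (c.mp.count o)

/-- `Ŝ⁻`: backward blocks `{o_{m_M(o) - m⁻(o) + 1}, ..., o_{m_M(o)}}`. -/
def hatM (M : Multiset O) (c : CmIStmt O M) : Finset (O × ℕ) :=
  Finset.univ.biUnion fun o : O =>
    block o (M.count o - c.mm.count o + 1) (M.count o)

/-- `Ŝ₁`: backward blocks below `Ŝ⁻`. -/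
def hat1 (M : Multiset O) (c : CmIStmt O M) : Finset (O × ℕ) :=
  Finset.univ.biUnion fun o : O =>
    block o (M.count o - c.mm.count o - c.m1.count o + 1)
      (M.count o - c.mm.count o)

/-- `Ŝ₂`: forward blocks just above `Ŝ⁺`. -/
def hat2 (M : Multiset O) (c : CmIStmt O M) : Finset (O × ℕ) :=
  Finset.univ.biUnion fun o : O =>
    block o (c.mp.count o + 1) (c.mp.count o + c.m2.count o)

/-- CI-flip with respect to the translated statement `c̄` on the ground set
`S_M`. -/
def HatFlip (M : Multiset O) (c : CmIStmt O M) (Sa Sb : Finset (O × ℕ)) : Prop :=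
  ∃ S' ⊆ SMset M \ (hatP M c ∪ hatM M c ∪ hat1 M c ∪ hat2 M c),
    Sa = S' ∪ hatP M c ∪ hat1 M c ∧ Sb = S' ∪ hatP M c ∪ hat2 M c

/-- Worsening flip with respect to the CI-net reduction `N_{S_M}`:
`⊃`-flips within `S_M`, flips of translated statements, and chain flips. -/
def RedFlip (M : Multiset O) (N : Set (CmIStmt O M))
    (Sa Sb : Finset (O × ℕ)) : Prop :=
  (Sb ⊂ Sa ∧ Sa ⊆ SMset M) ∨ (∃ c ∈ N, HatFlip M c Sa Sb) ∨ CsFlip M Sa Sb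

/-- A generic CI-statement (four compared finsets) over indexed copies. -/
structure Quad (α : Type*) where
  qp : Finset α
  qm : Finset α
  q1 : Finset α
  q2 : Finset α

/-- `r` satisfies a generic CI-statement over the ground set `G`. -/
def SatQuadOn {α : Type*} [DecidableEq α] (G : Finset α)
    (r : Finset α → Finset α → Prop) (q : Quad α) : Prop :=
  ∀ S' ⊆ G \ (q.qp ∪ q.qm ∪ q.q1 ∪ q.q2),
    r (S' ∪ q.qp ∪ q.q1) (S' ∪ q.qp ∪ q.q2)

/-- The CI-net reduction `N_{S_M}`: translated statements plus chains. -/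
def RedNet (M : Multiset O) (N : Set (CmIStmt O M)) : Set (Quad (O × ℕ)) :=
  {q | ∃ c ∈ N, q = ⟨hatP M c, hatM M c, hat1 M c, hat2 M c⟩} ∪
  {q | ∃ (o : O) (i : ℕ), 1 ≤ i ∧ i < M.count o ∧
        q = ⟨∅, ∅, {(o, i)}, {(o, i + 1)}⟩}

/-- Monotonicity on subsets of the ground set `G`. -/
def MonotonicOnF {α : Type*} (G : Finset α)
    (r : Finset α → Finset α → Prop) : Prop :=
  ∀ a b : Finset α, a ⊆ G → b ⊂ a → r a b

/-- Strict-partial-order conditions restricted to subsets of `G`. -/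
def IsPrefRelOnF {α : Type*} (G : Finset α)
    (r : Finset α → Finset α → Prop) : Prop :=
  (∀ a, a ⊆ G → ¬ r a a) ∧
  (∀ a b, a ⊆ G → b ⊆ G → r a b → ¬ r b a) ∧
  (∀ a b c, a ⊆ G → b ⊆ G → c ⊆ G → r a b → r b c → r a c)

/-- Satisfiability of the reduction CI-net. -/
def RedSatisfiable (M : Multiset O) (N : Set (CmIStmt O M)) : Prop :=
  ∃ r : Finset (O × ℕ) → Finset (O × ℕ) → Prop,
    IsPrefRelOnF (SMset M) r ∧ MonotonicOnF (SMset M) r ∧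
      ∀ q ∈ RedNet M N, SatQuadOn (SMset M) r q

/-- Induced relation of the reduction CI-net. -/
def RedInduced (M : Multiset O) (N : Set (CmIStmt O M))
    (a b : Finset (O × ℕ)) : Prop :=
  ∀ r : Finset (O × ℕ) → Finset (O × ℕ) → Prop,
    (IsPrefRelOnF (SMset M) r ∧ MonotonicOnF (SMset M) r ∧
      ∀ q ∈ RedNet M N, SatQuadOn (SMset M) r q) → r a b

set_option linter.unusedSectionVars false
set_option maxHeartbeats 1000000

section Aux18
variable {O : Type*} [DecidableEq O] [Fintype O]

/-- Project a finset of indexed copies back to a multiset. -/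
def mu (S : Finset (O × ℕ)) : Multiset O := S.val.map Prod.fst

lemma count_mu (S : Finset (O × ℕ)) (o : O) :
    (mu S).count o = (S.filter fun p => p.1 = o).card := by
  simp only [mu, Multiset.count_map, Finset.card, Finset.filter]
  congr 1
  exact Multiset.filter_congr (fun p _ => by constructor <;> (intro h; exact h.symm))

lemma mem_SMset {M : Multiset O} {p : O × ℕ} :
    p ∈ SMset M ↔ 1 ≤ p.2 ∧ p.2 ≤ M.count p.1 := by
  obtain ⟨o, i⟩ := p
  simp only [SMset, Finset.mem_biUnion, Finset.mem_image, Finset.mem_Icc,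
    Finset.mem_univ, true_and, Prod.mk.injEq]
  aesop

lemma mem_block {o o' : O} {a b i : ℕ} :
    (o', i) ∈ block o a b ↔ o' = o ∧ a ≤ i ∧ i ≤ b := by
  simp only [block, Finset.mem_image, Finset.mem_Icc, Prod.mk.injEq]
  aesop

lemma mem_ovl {K : Multiset O} {p : O × ℕ} :
    p ∈ ovl K ↔ 1 ≤ p.2 ∧ p.2 ≤ K.count p.1 := by
  obtain ⟨o, i⟩ := p
  simp only [ovl, Finset.mem_biUnion, Finset.mem_univ, true_and]
  constructor
  · rintro ⟨o', h⟩; rw [mem_block] at h; obtain ⟨rfl, h⟩ := h; exact h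
  · intro h; exact ⟨o, mem_block.2 ⟨rfl, h⟩⟩

lemma mu_mono {S T : Finset (O × ℕ)} (h : S ⊆ T) : mu S ≤ mu T :=
  Multiset.map_le_map (by exact_mod_cast Finset.val_le_iff.2 h)

lemma card_mu (S : Finset (O × ℕ)) : Multiset.card (mu S) = S.card := by
  simp [mu]

lemma mu_union_disjoint {S T : Finset (O × ℕ)} (h : Disjoint S T) :
    mu (S ∪ T) = mu S + mu T := by
  have : (S ∪ T).val = S.val + T.val := by
    rw [← Finset.disjUnion_eq_union S T h]; rfl
  rw [mu, this, Multiset.map_add]; rfl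

lemma filter_block_card (o : O) (a b : ℕ) (o' : O) :
    ((block o a b).filter fun p => p.1 = o').card
      = if o = o' then b + 1 - a else 0 := by
  split_ifs with h
  · subst h
    have : (block o a b).filter (fun p => p.1 = o) = block o a b := by
      apply Finset.filter_true_of_mem
      rintro ⟨o', i⟩ hp; exact (mem_block.1 hp).1
    rw [this, block, Finset.card_image_of_injective _ (fun x y h => by simpa using h)]
    simp [Nat.card_Icc]
  · rw [Finset.card_eq_zero, Finset.filter_eq_empty_iff]
    rintro ⟨o'', i⟩ hp
    rw [mem_block] at hp
    simp [hp.1, h]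

lemma mem_biUnion_block {f g : O → ℕ} {p : O × ℕ} :
    p ∈ (Finset.univ.biUnion fun o : O => block o (f o) (g o)) ↔
      f p.1 ≤ p.2 ∧ p.2 ≤ g p.1 := by
  obtain ⟨o, i⟩ := p
  simp only [Finset.mem_biUnion, Finset.mem_univ, true_and]
  constructor
  · rintro ⟨o', h⟩; rw [mem_block] at h; obtain ⟨rfl, h⟩ := h; exact h
  · intro h; exact ⟨o, mem_block.2 ⟨rfl, h⟩⟩

lemma count_mu_biUnion_block (f g : O → ℕ) (o : O) :
    (mu (Finset.univ.biUnion fun o : O => block o (f o) (g o))).count o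
      = g o + 1 - f o := by
  rw [count_mu]
  have : ((Finset.univ.biUnion fun o : O => block o (f o) (g o)).filter
      fun p => p.1 = o) = block o (f o) (g o) := by
    ext ⟨o', i⟩
    simp only [Finset.mem_filter, mem_biUnion_block, mem_block]
    aesop
  rw [this, block, Finset.card_image_of_injective _ (fun x y h => by simpa using h)]
  simp [Nat.card_Icc]

lemma SMset_eq (M : Multiset O) :
    SMset M = Finset.univ.biUnion fun o : O => block o 1 (M.count o) := rfl

lemma ovl_eq (K : Multiset O) :
    ovl K = Finset.univ.biUnion fun o : O => block o 1 (K.count o) := rfl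

lemma mu_ovl (K : Multiset O) : mu (ovl K) = K := by
  ext o
  rw [ovl_eq, count_mu_biUnion_block]
  omega

lemma mu_SMset (M : Multiset O) : mu (SMset M) = M := by
  ext o
  rw [SMset_eq, count_mu_biUnion_block]
  omega

lemma ovl_subset_SMset {K M : Multiset O} (h : K ≤ M) : ovl K ⊆ SMset M := by
  intro p hp
  rw [mem_ovl] at hp
  exact mem_SMset.2 ⟨hp.1, hp.2.trans (Multiset.le_iff_count.1 h p.1)⟩

lemma ovl_subset {A B : Multiset O} (h : A ≤ B) : ovl A ⊆ ovl B := by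
  intro p hp
  rw [mem_ovl] at hp ⊢
  exact ⟨hp.1, hp.2.trans (Multiset.le_iff_count.1 h p.1)⟩

lemma ovl_ssubset {A B : Multiset O} (h : A < B) : ovl A ⊂ ovl B := by
  refine ⟨ovl_subset h.le, fun hc => ?_⟩
  obtain ⟨o, ho⟩ : ∃ o, A.count o < B.count o := by
    by_contra hno
    push_neg at hno
    exact h.ne (le_antisymm h.le (Multiset.le_iff_count.2 hno))
  have : (o, A.count o + 1) ∈ ovl B := mem_ovl.2 ⟨by omega, by simpa using ho⟩
  have := mem_ovl.1 (hc this)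
  simp at this

/-- Per-object count bound coming from the statement's side conditions. -/
lemma counts_le {M : Multiset O} (c : CmIStmt O M) (o : O) :
    c.mp.count o + c.mm.count o + c.m1.count o + c.m2.count o ≤ M.count o := by
  have hp := Multiset.le_iff_count.1 c.hp o
  have hm := Multiset.le_iff_count.1 c.hm o
  have h1 := Multiset.le_iff_count.1 c.h1 o
  have h2 := Multiset.le_iff_count.1 c.h2 o
  have hd : min (c.m1.count o) (c.m2.count o) = 0 := by
    rw [← Multiset.count_inter, c.d12, Multiset.count_zero]
  rw [Multiset.count_sub] at hm
  rw [Multiset.count_sub, Multiset.count_add] at h1 h2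
  omega

lemma mem_hatP {M : Multiset O} {c : CmIStmt O M} {p : O × ℕ} :
    p ∈ hatP M c ↔ 1 ≤ p.2 ∧ p.2 ≤ c.mp.count p.1 := mem_biUnion_block

lemma mem_hatM {M : Multiset O} {c : CmIStmt O M} {p : O × ℕ} :
    p ∈ hatM M c ↔ M.count p.1 - c.mm.count p.1 + 1 ≤ p.2 ∧ p.2 ≤ M.count p.1 :=
  mem_biUnion_block

lemma mem_hat1 {M : Multiset O} {c : CmIStmt O M} {p : O × ℕ} :
    p ∈ hat1 M c ↔ M.count p.1 - c.mm.count p.1 - c.m1.count p.1 + 1 ≤ p.2 ∧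
      p.2 ≤ M.count p.1 - c.mm.count p.1 := mem_biUnion_block

lemma mem_hat2 {M : Multiset O} {c : CmIStmt O M} {p : O × ℕ} :
    p ∈ hat2 M c ↔ c.mp.count p.1 + 1 ≤ p.2 ∧
      p.2 ≤ c.mp.count p.1 + c.m2.count p.1 := mem_biUnion_block

lemma mu_hatP {M : Multiset O} (c : CmIStmt O M) : mu (hatP M c) = c.mp := by
  ext o; rw [hatP, count_mu_biUnion_block]; omega

lemma mu_hatM {M : Multiset O} (c : CmIStmt O M) : mu (hatM M c) = c.mm := by
  ext o; rw [hatM, count_mu_biUnion_block]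
  have := counts_le c o; omega

lemma mu_hat1 {M : Multiset O} (c : CmIStmt O M) : mu (hat1 M c) = c.m1 := by
  ext o; rw [hat1, count_mu_biUnion_block]
  have := counts_le c o; omega

lemma mu_hat2 {M : Multiset O} (c : CmIStmt O M) : mu (hat2 M c) = c.m2 := by
  ext o; rw [hat2, count_mu_biUnion_block]; omega

lemma mu_le_of_subset_SMset {M : Multiset O} {S : Finset (O × ℕ)}
    (h : S ⊆ SMset M) : mu S ≤ M :=
  (mu_mono h).trans (mu_SMset M).le

/-- Index-sum tiebreaker. -/
def isum (S : Finset (O × ℕ)) : ℕ := ∑ p ∈ S, p.2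

/-- Forward translation of a multiset relation to indexed-copy sets. -/
def fwdRel (r : Multiset O → Multiset O → Prop) (S T : Finset (O × ℕ)) : Prop :=
  r (mu S) (mu T) ∨ (mu S = mu T ∧ isum S < isum T)

lemma fwd_pref {M : Multiset O} {r : Multiset O → Multiset O → Prop}
    (hr : IsPrefRelOn M r) : IsPrefRelOnF (SMset M) (fwdRel r) := by
  obtain ⟨hirr, hasym, htrans⟩ := hr
  refine ⟨?_, ?_, ?_⟩
  · rintro a ha (h | ⟨_, h⟩)
    · exact hirr _ (mu_le_of_subset_SMset ha) h
    · exact lt_irrefl _ h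
  · rintro a b ha hb (hab | ⟨he, hs⟩) (hba | ⟨he', hs'⟩)
    · exact hasym _ _ (mu_le_of_subset_SMset ha) (mu_le_of_subset_SMset hb) hab hba
    · exact hirr _ (mu_le_of_subset_SMset ha) (he' ▸ hab)
    · exact hirr _ (mu_le_of_subset_SMset hb) (he ▸ hba)
    · omega
  · rintro a b c ha hb hc (hab | ⟨he, hs⟩) (hbc | ⟨he', hs'⟩)
    · exact Or.inl (htrans _ _ _ (mu_le_of_subset_SMset ha) (mu_le_of_subset_SMset hb)
        (mu_le_of_subset_SMset hc) hab hbc)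
    · exact Or.inl (he' ▸ hab)
    · exact Or.inl (he ▸ hbc)
    · exact Or.inr ⟨he.trans he', hs.trans hs'⟩

lemma fwd_mono {M : Multiset O} {r : Multiset O → Multiset O → Prop}
    (hr : MonotonicOn M r) : MonotonicOnF (SMset M) (fwdRel r) := by
  intro a b ha hb
  left
  apply hr _ _ (mu_le_of_subset_SMset ha)
  refine lt_of_le_of_ne (mu_mono hb.subset) fun he => ?_
  have := congrArg Multiset.card he
  rw [card_mu, card_mu] at this
  exact absurd this (Finset.card_lt_card hb).ne

lemma hats_pairwise_disjoint {M : Multiset O} (c : CmIStmt O M) :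
    Disjoint (hatP M c) (hatM M c) ∧ Disjoint (hatP M c) (hat1 M c) ∧
    Disjoint (hatP M c) (hat2 M c) ∧ Disjoint (hatM M c) (hat1 M c) ∧
    Disjoint (hatM M c) (hat2 M c) ∧ Disjoint (hat1 M c) (hat2 M c) := by
  refine ⟨?_, ?_, ?_, ?_, ?_, ?_⟩ <;>
  · rw [Finset.disjoint_left]
    intro p h1 h2
    first
      | (simp only [mem_hatP] at h1) | (simp only [mem_hatM] at h1) | (simp only [mem_hat1] at h1)
    first
      | (simp only [mem_hatM] at h2) | (simp only [mem_hat1] at h2) | (simp only [mem_hat2] at h2)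
    have := counts_le c p.1
    omega

lemma hats_subset_SMset {M : Multiset O} (c : CmIStmt O M) :
    hatP M c ∪ hatM M c ∪ hat1 M c ∪ hat2 M c ⊆ SMset M := by
  intro p hp
  have := counts_le c p.1
  rw [mem_SMset]
  rcases Finset.mem_union.1 hp with hp | hp
  · rcases Finset.mem_union.1 hp with hp | hp
    · rcases Finset.mem_union.1 hp with hp | hp
      · rw [mem_hatP] at hp; omega
      · rw [mem_hatM] at hp; omega
    · rw [mem_hat1] at hp; omega
  · rw [mem_hat2] at hp; omega

lemma mu_hats {M : Multiset O} (c : CmIStmt O M) :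
    mu (hatP M c ∪ hatM M c ∪ hat1 M c ∪ hat2 M c)
      = c.mp + c.mm + c.m1 + c.m2 := by
  obtain ⟨d1, d2, d3, d4, d5, d6⟩ := hats_pairwise_disjoint c
  rw [mu_union_disjoint (by simp [Finset.disjoint_union_left, d3, d5, d6]),
    mu_union_disjoint (by simp [Finset.disjoint_union_left, d2, d4]),
    mu_union_disjoint d1, mu_hatP, mu_hatM, mu_hat1, mu_hat2]

lemma mu_sdiff_hats {M : Multiset O} (c : CmIStmt O M) :
    mu (SMset M \ (hatP M c ∪ hatM M c ∪ hat1 M c ∪ hat2 M c))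
      = M - (c.mp + c.mm + c.m1 + c.m2) := by
  have hsub := hats_subset_SMset c
  have hu : hatP M c ∪ hatM M c ∪ hat1 M c ∪ hat2 M c
      ∪ (SMset M \ (hatP M c ∪ hatM M c ∪ hat1 M c ∪ hat2 M c)) = SMset M :=
    Finset.union_sdiff_of_subset hsub
  have := congrArg mu hu
  rw [mu_union_disjoint (Finset.disjoint_sdiff), mu_hats, mu_SMset] at this
  ext o
  have hc := congrArg (Multiset.count o) this
  rw [Multiset.count_add] at hc
  rw [Multiset.count_sub]
  omega

lemma mu_singleton (o : O) (i : ℕ) : mu ({(o, i)} : Finset (O × ℕ)) = {o} := rfl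

lemma fwd_quads {M : Multiset O} {N : Set (CmIStmt O M)}
    {r : Multiset O → Multiset O → Prop} (hsat : SatCmNet M r N) :
    ∀ q ∈ RedNet M N, SatQuadOn (SMset M) (fwdRel r) q := by
  rintro q (⟨c, hc, rfl⟩ | ⟨o, i, hi1, hi2, rfl⟩) S' hS'
  · -- translated statement
    simp only at hS' ⊢
    obtain ⟨d1, d2, d3, d4, d5, d6⟩ := hats_pairwise_disjoint c
    have hSd : ∀ p ∈ S', p ∉ hatP M c ∪ hatM M c ∪ hat1 M c ∪ hat2 M c :=
      fun p hp => (Finset.mem_sdiff.1 (hS' hp)).2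
    have dP : Disjoint S' (hatP M c) := Finset.disjoint_left.2 fun p hp h =>
      hSd p hp (by simp [Finset.mem_union, h])
    have dM : Disjoint S' (hatM M c) := Finset.disjoint_left.2 fun p hp h =>
      hSd p hp (by simp [Finset.mem_union, h])
    have dA : Disjoint S' (hat1 M c) := Finset.disjoint_left.2 fun p hp h =>
      hSd p hp (by simp [Finset.mem_union, h])
    have dB : Disjoint S' (hat2 M c) := Finset.disjoint_left.2 fun p hp h =>
      hSd p hp (by simp [Finset.mem_union, h])
    have hmuA : mu (S' ∪ hatP M c ∪ hat1 M c) = mu S' + c.mp + c.m1 := by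
      rw [mu_union_disjoint (by simp [Finset.disjoint_union_left, dA, d2]),
        mu_union_disjoint dP, mu_hatP, mu_hat1]
    have hmuB : mu (S' ∪ hatP M c ∪ hat2 M c) = mu S' + c.mp + c.m2 := by
      rw [mu_union_disjoint (by simp [Finset.disjoint_union_left, dB, d3]),
        mu_union_disjoint dP, mu_hatP, mu_hat2]
    have hle : mu S' ≤ M - (c.mp + c.mm + c.m1 + c.m2) :=
      (mu_mono hS').trans (mu_sdiff_hats c).le
    exact Or.inl (hmuA ▸ hmuB ▸ hsat.2 c hc (mu S') hle)
  · -- chain statement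
    simp only [Finset.empty_union, Finset.union_empty] at hS' ⊢
    have hni : (o, i) ∉ S' := fun h => by
      have := (Finset.mem_sdiff.1 (hS' h)).2; simp at this
    have hni' : (o, i + 1) ∉ S' := fun h => by
      have := (Finset.mem_sdiff.1 (hS' h)).2; simp at this
    right
    constructor
    · rw [mu_union_disjoint (Finset.disjoint_singleton_right.2 hni),
        mu_union_disjoint (Finset.disjoint_singleton_right.2 hni'),
        mu_singleton, mu_singleton]
    · rw [isum, isum, Finset.sum_union (Finset.disjoint_singleton_right.2 hni),
        Finset.sum_union (Finset.disjoint_singleton_right.2 hni')]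
      simp

lemma initial_seg (s : Finset ℕ) (h0 : 0 ∉ s)
    (hd : ∀ j, j + 1 ∈ s → j = 0 ∨ j ∈ s) : s = Finset.Icc 1 s.card := by
  have dcl : ∀ j, j ∈ s → ∀ m, 1 ≤ m → m ≤ j → m ∈ s := by
    intro j
    induction j with
    | zero => intro _ m h1 h2; omega
    | succ n ih =>
      intro hj m h1 h2
      rcases Nat.lt_or_ge m (n + 1) with h | h
      · rcases hd n hj with h0' | hn
        · omega
        · exact ih hn m h1 (by omega)
      · have : m = n + 1 := by omega
        exact this ▸ hj
  have hsub : s ⊆ Finset.Icc 1 s.card := by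
    intro j hj
    rw [Finset.mem_Icc]
    have h1 : 1 ≤ j := by
      rcases Nat.eq_zero_or_pos j with rfl | h; · exact absurd hj h0
      · exact h
    refine ⟨h1, ?_⟩
    have : Finset.Icc 1 j ⊆ s := fun m hm => by
      rw [Finset.mem_Icc] at hm; exact dcl j hj m hm.1 hm.2
    calc j = (Finset.Icc 1 j).card := by simp
    _ ≤ s.card := Finset.card_le_card this
  exact Finset.eq_of_subset_of_card_le hsub (by simp)

lemma mu_insert {p : O × ℕ} {S : Finset (O × ℕ)} (h : p ∉ S) :
    mu (insert p S) = p.1 ::ₘ mu S := by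
  rw [mu, Finset.insert_val, Multiset.ndinsert_of_notMem (by simpa using h),
    Multiset.map_cons]
  rfl

/-- The prefix configuration `ovl (mu T)` is preferred to any other
configuration `T` with the same column counts. -/
lemma key_prefix {M : Multiset O} {N : Set (CmIStmt O M)}
    {r' : Finset (O × ℕ) → Finset (O × ℕ) → Prop}
    (hpref : IsPrefRelOnF (SMset M) r')
    (hquads : ∀ q ∈ RedNet M N, SatQuadOn (SMset M) r' q) :
    ∀ T ⊆ SMset M, T = ovl (mu T) ∨ r' (ovl (mu T)) T := by
  suffices h : ∀ n, ∀ T ⊆ SMset M, isum T = n →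
      (T = ovl (mu T) ∨ r' (ovl (mu T)) T) by
    intro T hT; exact h (isum T) T hT rfl
  intro n
  induction n using Nat.strong_induction_on with
  | _ n ih =>
    intro T hT hn
    by_cases hgap : ∃ o i, 1 ≤ i ∧ (o, i) ∉ T ∧ (o, i + 1) ∈ T
    · obtain ⟨o, i, hi1, hni, hmem⟩ := hgap
      have hiub : i + 1 ≤ M.count o := (mem_SMset.1 (hT hmem)).2
      set E := T.erase (o, i + 1) with hE
      have hTE : insert (o, i + 1) E = T := Finset.insert_erase hmem
      have hniE : (o, i) ∉ E := fun h => hni (Finset.erase_subset _ _ h)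
      have hni1E : (o, i + 1) ∉ E := Finset.notMem_erase _ _
      set T' := insert (o, i) E with hT'
      have hT'sub : T' ⊆ SMset M := by
        intro p hp
        rcases Finset.mem_insert.1 hp with rfl | hp
        · exact mem_SMset.2 ⟨hi1, show i ≤ M.count o by omega⟩
        · exact hT (Finset.erase_subset _ _ hp)
      have hmuT : mu T' = mu T := by
        rw [hT', ← hTE, mu_insert hniE, mu_insert hni1E]
      have hisum : isum T' < n := by
        have h1 : isum T = isum E + (i + 1) := by
          rw [← hTE, isum, isum, Finset.sum_insert hni1E]; ring
        have h2 : isum T' = isum E + i := by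
          rw [hT', isum, isum, Finset.sum_insert hniE]; ring
        omega
      -- chain flip r' T' T
      have hflip : r' T' T := by
        have hq : (⟨∅, ∅, {(o, i)}, {(o, i + 1)}⟩ : Quad (O × ℕ)) ∈ RedNet M N :=
          Or.inr ⟨o, i, hi1, by omega, rfl⟩
        have := hquads _ hq E (by
          intro p hp
          rw [Finset.mem_sdiff]
          refine ⟨hT (Finset.erase_subset _ _ hp), ?_⟩
          simp only [Finset.empty_union, Finset.union_empty, Finset.mem_union,
            Finset.mem_singleton]
          rintro (rfl | rfl)
          · exact hniE hp
          · exact hni1E hp)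
        simp only [Finset.empty_union, Finset.union_empty] at this
        rw [Finset.union_comm E, ← Finset.insert_eq, Finset.union_comm E,
          ← Finset.insert_eq] at this
        rwa [hTE] at this
      rcases ih (isum T') hisum T' hT'sub rfl with heq | hpr
      · right; rw [← hmuT, ← heq]; exact hflip
      · right
        rw [← hmuT]
        refine hpref.2.2 _ _ _ ?_ hT'sub hT hpr hflip
        exact ovl_subset_SMset (hmuT ▸ mu_le_of_subset_SMset hT)
    · -- no gap: T is the prefix configuration
      left
      push_neg at hgap
      ext ⟨o, i⟩
      rw [mem_ovl]
      have hcol : ∀ j : ℕ, (o, j) ∈ T ↔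
          j ∈ (T.filter fun p => p.1 = o).image Prod.snd := by
        intro j
        simp only [Finset.mem_image, Finset.mem_filter]
        constructor
        · intro h; exact ⟨(o, j), ⟨h, rfl⟩, rfl⟩
        · rintro ⟨⟨o', j'⟩, ⟨h, rfl⟩, rfl⟩; exact h
      set s := (T.filter fun p => p.1 = o).image Prod.snd with hs
      have hcard : s.card = (mu T).count o := by
        rw [count_mu, hs]
        apply Finset.card_image_of_injOn
        rintro ⟨o1, j1⟩ h1 ⟨o2, j2⟩ h2 h
        simp only [Finset.mem_coe, Finset.mem_filter] at h1 h2
        simp only at h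
        rw [Prod.mk.injEq]
        exact ⟨h1.2.trans h2.2.symm, h⟩
      have h0 : 0 ∉ s := fun h => by
        have := (mem_SMset.1 (hT ((hcol 0).2 h))).1
        simp at this
      have hd : ∀ j, j + 1 ∈ s → j = 0 ∨ j ∈ s := by
        intro j hj
        rcases Nat.eq_zero_or_pos j with rfl | hjpos
        · exact Or.inl rfl
        · exact Or.inr ((hcol j).1 (not_not.1 fun hnj =>
            hgap o j hjpos hnj ((hcol (j + 1)).2 hj)))
      have hseg := initial_seg s h0 hd
      rw [hcol i, hseg, hcard, Finset.mem_Icc]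

/-- Backward translation of an indexed-copy relation to multisets. -/
def bwdRel (r' : Finset (O × ℕ) → Finset (O × ℕ) → Prop)
    (A B : Multiset O) : Prop := r' (ovl A) (ovl B)

lemma bwd_pref {M : Multiset O} {r' : Finset (O × ℕ) → Finset (O × ℕ) → Prop}
    (hp : IsPrefRelOnF (SMset M) r') : IsPrefRelOn M (bwdRel r') := by
  refine ⟨fun a ha => hp.1 _ (ovl_subset_SMset ha),
    fun a b ha hb => hp.2.1 _ _ (ovl_subset_SMset ha) (ovl_subset_SMset hb),
    fun a b c ha hb hc => hp.2.2 _ _ _ (ovl_subset_SMset ha)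
      (ovl_subset_SMset hb) (ovl_subset_SMset hc)⟩

lemma bwd_mono {M : Multiset O} {r' : Finset (O × ℕ) → Finset (O × ℕ) → Prop}
    (hm : MonotonicOnF (SMset M) r') : MonotonicOn M (bwdRel r') :=
  fun a b ha hb => hm _ _ (ovl_subset_SMset ha) (ovl_ssubset hb)

lemma bwd_stmt {M : Multiset O} {N : Set (CmIStmt O M)}
    {r' : Finset (O × ℕ) → Finset (O × ℕ) → Prop}
    (hp : IsPrefRelOnF (SMset M) r')
    (hq : ∀ q ∈ RedNet M N, SatQuadOn (SMset M) r' q) :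
    ∀ c ∈ N, SatCmStmt M (bwdRel r') c := by
  intro c hc M' hM'
  have hK : ∀ o : O, M'.count o + (c.mp.count o + c.mm.count o
      + c.m1.count o + c.m2.count o) ≤ M.count o := by
    intro o
    have := Multiset.le_iff_count.1 hM' o
    rw [Multiset.count_sub] at this
    simp only [Multiset.count_add] at this
    have := counts_le c o
    omega
  set S' := Finset.univ.biUnion fun o : O =>
    block o (c.mp.count o + c.m2.count o + 1)
      (c.mp.count o + c.m2.count o + M'.count o) with hS'def
  have hcb := counts_le c
  -- S' is inside the allowed region
  have hS'sub : S' ⊆ SMset M \ (hatP M c ∪ hatM M c ∪ hat1 M c ∪ hat2 M c) := by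
    intro p hp'
    rw [hS'def, mem_biUnion_block] at hp'
    have h1 := hK p.1
    have h2 := hcb p.1
    rw [Finset.mem_sdiff, mem_SMset]
    refine ⟨⟨by omega, by omega⟩, ?_⟩
    simp only [Finset.mem_union, mem_hatP, mem_hatM, mem_hat1, mem_hat2]
    omega
  -- the second compared set is exactly the prefix configuration
  have hSb : S' ∪ hatP M c ∪ hat2 M c = ovl (M' + c.mp + c.m2) := by
    ext p
    simp only [Finset.mem_union, hS'def, mem_biUnion_block, mem_hatP, mem_hat2,
      mem_ovl, Multiset.count_add]
    omega
  -- column counts of the first compared set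
  have hmuSa : mu (S' ∪ hatP M c ∪ hat1 M c) = M' + c.mp + c.m1 := by
    obtain ⟨d1, d2, d3, d4, d5, d6⟩ := hats_pairwise_disjoint c
    have dSP : Disjoint S' (hatP M c) := Finset.disjoint_left.2 fun p hp1 hp2 => by
      rw [hS'def, mem_biUnion_block] at hp1
      rw [mem_hatP] at hp2
      omega
    have dS1 : Disjoint S' (hat1 M c) := Finset.disjoint_left.2 fun p hp1 hp2 => by
      rw [hS'def, mem_biUnion_block] at hp1
      rw [mem_hat1] at hp2
      have := hK p.1
      omega
    have hmuS' : mu S' = M' := by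
      ext o
      rw [hS'def, count_mu_biUnion_block]
      omega
    rw [mu_union_disjoint (by simp [Finset.disjoint_union_left, dS1, d2]),
      mu_union_disjoint dSP, hmuS', mu_hatP, mu_hat1]
  have hSasub : S' ∪ hatP M c ∪ hat1 M c ⊆ SMset M := by
    intro p hp'
    rcases Finset.mem_union.1 hp' with hp' | hp'
    · rcases Finset.mem_union.1 hp' with hp' | hp'
      · exact (Finset.mem_sdiff.1 (hS'sub hp')).1
      · exact hats_subset_SMset c (by simp [Finset.mem_union, hp'])
    · exact hats_subset_SMset c (by simp [Finset.mem_union, hp'])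
  -- the translated quad gives one worsening flip
  have hflip : r' (S' ∪ hatP M c ∪ hat1 M c) (S' ∪ hatP M c ∪ hat2 M c) := by
    have hqmem : (⟨hatP M c, hatM M c, hat1 M c, hat2 M c⟩ : Quad (O × ℕ))
        ∈ RedNet M N := Or.inl ⟨c, hc, rfl⟩
    exact hq _ hqmem S' hS'sub
  rw [hSb] at hflip
  -- go from the prefix configuration to the first compared set
  rcases key_prefix hp hq _ hSasub with heq | hpr
  · show r' (ovl (M' + c.mp + c.m1)) (ovl (M' + c.mp + c.m2))
    rw [← hmuSa, ← heq]
    exact hflip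
  · show r' (ovl (M' + c.mp + c.m1)) (ovl (M' + c.mp + c.m2))
    rw [← hmuSa]
    refine hp.2.2 _ _ _ ?_ hSasub ?_ (hmuSa ▸ hpr) hflip
    · exact ovl_subset_SMset (mu_le_of_subset_SMset hSasub)
    · exact ovl_subset_SMset (Multiset.le_iff_count.2 fun o => by
        simp only [Multiset.count_add]
        have := hK o
        omega)

end Aux18
/-- `N_M` is satisfiable iff its CI-net reduction `N_{S_M}` is,
and in that case `M_a >_{N_M} M_b` iff
`overline{M_a} >_{N_{S_M}} overline{M_b}`. -/
theorem stmt_18 (M : Multiset O) (N : Set (CmIStmt O M)) :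
    (CmSatisfiable M N ↔ RedSatisfiable M N) ∧
    (CmSatisfiable M N → ∀ Ma Mb : Multiset O, Ma ≤ M → Mb ≤ M →
      (CmInduced M N Ma Mb ↔ RedInduced M N (ovl Ma) (ovl Mb))) := by
  constructor
  · constructor
    · rintro ⟨r, hpref, hmono, hstmts⟩
      exact ⟨fwdRel r, fwd_pref hpref, fwd_mono hmono, fwd_quads ⟨hmono, hstmts⟩⟩
    · rintro ⟨r', hp, hm, hq⟩
      exact ⟨bwdRel r', bwd_pref hp, bwd_mono hm, bwd_stmt hp hq⟩
  · intro _ Ma Mb hMa hMb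
    constructor
    · rintro hind r' ⟨hp, hm, hq⟩
      exact hind (bwdRel r') ⟨bwd_pref hp, bwd_mono hm, bwd_stmt hp hq⟩
    · rintro hind r ⟨hpref, hmono, hstmts⟩
      have := hind (fwdRel r)
        ⟨fwd_pref hpref, fwd_mono hmono, fwd_quads ⟨hmono, hstmts⟩⟩
      rcases this with h | ⟨he, hs⟩
      · rwa [mu_ovl, mu_ovl] at h
      · rw [mu_ovl, mu_ovl] at he
        subst he
        exact absurd hs (lt_irrefl _)
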